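/- arXiv:1001.0094 — 4 statements merged into one kernel-verified Lean document; each statement's English description precedes it below -/
import Mathlib

section
/- Let X and Y be Polish spaces, (Ω,F,P) a probability space, μ a probability kernel from Ω to X, ν a probability kernel from Ω to Y, and c : Ω×X×Y → [0,∞) a function such that for each ω the map (x,y) ↦ c(ω,x,y) is continuous, for each (x,y) the map ω ↦ c(ω,x,y) is F-measurable, and E ∫_{X×Y} c(ω,x,y) μ_ω(dx) ν_ω(dy) < +∞. If π ∈ K(μ,ν) is a stochastic optimal transference plan, i.e. E ∫ c(ω,x,y) π_ω(dx,dy) = C^stoch(c,μ,ν), then for P-almost all ω ∈ Ω the support of π_ω is a c(ω,·,·)-cyclically monotone subset of X×Y. -/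
open MeasureTheory ProbabilityTheory Filter ENNReal

/-- The stochastic Monge–Kantorovich cost: the infimum, over all probability kernels `π`
from `Ω` to `X × Y` whose marginal kernels are `μ` and `ν`, of
`E ∫ c(ω,x,y) π_ω(dx,dy)`. -/
noncomputable def stochCost {Ω X Y : Type*} [MeasurableSpace Ω] [MeasurableSpace X]
    [MeasurableSpace Y] (P : Measure Ω) (c : Ω → X → Y → ℝ)
    (μ : Kernel Ω X) (ν : Kernel Ω Y) : ℝ≥0∞ :=
  ⨅ π ∈ {π : Kernel Ω (X × Y) | IsMarkovKernel π ∧ π.fst = μ ∧ π.snd = ν},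
    ∫⁻ ω, ∫⁻ q, ENNReal.ofReal (c ω q.1 q.2) ∂(π ω) ∂P

/-- A set `Γ ⊆ X × Y` is `c`-cyclically monotone if for any finite family
`(x₁,y₁),…,(x_N,y_N)` of points of `Γ`, `∑ c(xᵢ,yᵢ) ≤ ∑ c(xᵢ,y_{i+1})` (indices mod `N`). -/
def CyclicallyMonotone {X Y : Type*} (c : X → Y → ℝ) (Γ : Set (X × Y)) : Prop :=
  ∀ (N : ℕ) (f : Fin (N + 1) → X × Y), (∀ i, f i ∈ Γ) →
    ∑ i, c (f i).1 (f i).2 ≤ ∑ i, c (f i).1 (f (i + 1)).2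

/-- The topological support of a measure: all points whose every open neighbourhood has
positive measure. -/
def measureSupport {X : Type*} [TopologicalSpace X] [MeasurableSpace X]
    (m : Measure X) : Set X :=
  {x | ∀ U : Set X, IsOpen U → x ∈ U → m U ≠ 0}

/-!
If the support of `π ω` is not `c ω`-cyclically monotone, continuity of the cost yields boxes
`Uᵢ ×ˢ Vᵢ` of positive `π ω`-mass around the offending points `(xᵢ, yᵢ)` and rational thresholds
with `c ω ≥ tᵢ` on `Uᵢ ×ˢ Vᵢ`, `c ω ≤ sᵢ` on `Uᵢ ×ˢ Vᵢ₊₁` and `∑ sᵢ < ∑ tᵢ`. Removing a small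
multiple of the normalised restriction of `π ω` to each box and adding the product of its first
marginal with the second marginal of the next box keeps both marginals and strictly lowers the
cost. Countably many such configurations (basis boxes, rational thresholds) suffice; for each of
them the set of `ω` where it occurs is measurable, because the cost is continuous in `(x, y)` and
the box conditions reduce to a countable dense set. Rearranging `π` on that set gives an admissible
plan that is strictly cheaper unless the set is `P`-null.
-/

open TopologicalSpace Topology

lemma ENNReal.sum_ofReal_lt_sum_ofReal {ι : Type*} {S : Finset ι} {s t : ι → ℝ}
    (hs : ∀ i ∈ S, 0 ≤ s i) (h : ∑ i ∈ S, s i < ∑ i ∈ S, t i) :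
    ∑ i ∈ S, ENNReal.ofReal (s i) < ∑ i ∈ S, ENNReal.ofReal (t i) := by
  rw [← ENNReal.ofReal_sum_of_nonneg hs]
  exact ((ENNReal.ofReal_lt_ofReal_iff_of_nonneg (Finset.sum_nonneg hs)).2 h).trans_le
    (Finset.le_sum_of_subadditive _ ENNReal.ofReal_zero.le (fun _ _ => ENNReal.ofReal_add_le) _ _)

lemma exists_rat_sum_lt_sum {ι : Type*} [Fintype ι] {e d : ι → ℝ} (h : ∑ i, e i < ∑ i, d i) :
    ∃ s t : ι → ℚ, (∀ i, e i < s i) ∧ (∀ i, (t i : ℝ) < d i) ∧ ∑ i, (s i : ℝ) < ∑ i, (t i : ℝ) := by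
  rcases isEmpty_or_nonempty ι with _ | _
  · simp at h
  have hcard : (0 : ℝ) < Fintype.card ι := by exact_mod_cast Fintype.card_pos
  set δ := (∑ i, d i - ∑ i, e i) / (2 * Fintype.card ι)
  have hδ : 0 < δ := div_pos (by linarith) (by positivity)
  have hcardδ : Fintype.card ι * δ = (∑ i, d i - ∑ i, e i) / 2 := by
    simp only [δ]; field_simp
  choose s hs using fun i => exists_rat_btwn (lt_add_of_pos_right (e i) hδ)
  choose t ht using fun i => exists_rat_btwn (sub_lt_self (d i) hδ)
  refine ⟨s, t, fun i => (hs i).1, fun i => (ht i).2, ?_⟩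
  have hs' : ∑ i, (s i : ℝ) < ∑ i, (e i + δ) :=
    Finset.sum_lt_sum_of_nonempty Finset.univ_nonempty fun i _ => (hs i).2
  have ht' : ∑ i, (d i - δ) < ∑ i, (t i : ℝ) :=
    Finset.sum_lt_sum_of_nonempty Finset.univ_nonempty fun i _ => (ht i).1
  simp only [Finset.sum_add_distrib, Finset.sum_sub_distrib, Finset.sum_const, Finset.card_univ,
    nsmul_eq_mul] at hs' ht'
  linarith

lemma measurableSet_setOf_forall_mem_of_continuous {Ω Z β : Type*} [MeasurableSpace Ω]
    [TopologicalSpace Z] [SeparableSpace Z] [TopologicalSpace β] [MeasurableSpace β]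
    [OpensMeasurableSpace β] {f : Ω → Z → β} (hcont : ∀ ω, Continuous (f ω))
    (hmeas : ∀ z, Measurable fun ω => f ω z) {W : Set Z} (hW : IsOpen W) {F : Set β}
    (hF : IsClosed F) : MeasurableSet {ω | ∀ z ∈ W, f ω z ∈ F} := by
  obtain ⟨D, hDc, hD⟩ := exists_countable_dense Z
  have hdense : {ω | ∀ z ∈ W, f ω z ∈ F} = ⋂ z ∈ W ∩ D, {ω | f ω z ∈ F} := by
    ext ω
    simp only [Set.mem_ofPred_eq, Set.mem_iInter]
    refine ⟨fun h z hz => h z hz.1, fun h z hz => ?_⟩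
    -- `f ω ⁻¹' F` is closed and `W ∩ D` is dense in the open set `W`
    exact (hF.preimage (hcont ω)).closure_subset_iff.2 (fun z hz => h z hz)
      (hD.open_subset_closure_inter hW hz)
  rw [hdense]
  exact .biInter (hDc.mono Set.inter_subset_right) fun z _ => hmeas z hF.measurableSet

namespace MeasureTheory

variable {α β : Type*} [MeasurableSpace α] [MeasurableSpace β]

lemma Measure.map_sub_add_of_map_eq {m ν ν' : Measure α} [IsFiniteMeasure ν] (hν : ν ≤ m)
    {f : α → β} (hf : Measurable f) (h : ν'.map f = ν.map f) : (m - ν + ν').map f = m.map f := by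
  conv_rhs => rw [← Measure.sub_add_cancel_of_le hν]
  rw [Measure.map_add _ _ hf, Measure.map_add _ _ hf, h]

lemma lintegral_sub_add_measure_lt {m ν ν' : Measure α} [IsFiniteMeasure ν] (hν : ν ≤ m)
    {f : α → ℝ≥0∞} (hm : ∫⁻ a, f a ∂m ≠ ∞) (h : ∫⁻ a, f a ∂ν' < ∫⁻ a, f a ∂ν) :
    ∫⁻ a, f a ∂(m - ν + ν') < ∫⁻ a, f a ∂m := by
  have hsplit : ∫⁻ a, f a ∂m = ∫⁻ a, f a ∂(m - ν) + ∫⁻ a, f a ∂ν := by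
    conv_lhs => rw [← Measure.sub_add_cancel_of_le hν]
    rw [lintegral_add_measure]
  rw [lintegral_add_measure, hsplit]
  exact ENNReal.add_lt_add_left (ne_top_of_le_ne_top hm (lintegral_mono' Measure.sub_le le_rfl)) h

lemma Measure.measurable_cond {s : Set α} (hs : MeasurableSet s) :
    Measurable fun m : Measure α => m[|s] :=
  Measure.measurable_of_measurable_coe _ fun t ht => by
    simp_rw [cond_apply hs]
    exact (Measure.measurable_coe hs).inv.mul (Measure.measurable_coe (hs.inter ht))

lemma measure_eq_zero_of_lintegral_le_of_lt {μ : Measure α} {f g : α → ℝ≥0∞} {E : Set α}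
    (hg : AEMeasurable g μ) (hgfin : ∫⁻ a, g a ∂μ ≠ ∞) (hfg : ∀ a, f a ≤ g a)
    (hlt : ∀ a ∈ E, g a ≠ ∞ → f a < g a) (hgf : ∫⁻ a, g a ∂μ ≤ ∫⁻ a, f a ∂μ) : μ E = 0 := by
  by_contra hE
  refine (lintegral_strict_mono_of_ae_le_of_ae_lt_on hg
    (ne_top_of_le_ne_top hgfin (lintegral_mono hfg)) (ae_of_all _ hfg) hE ?_).not_ge hgf
  filter_upwards [ae_lt_top' hg hgfin] with a ha haE using hlt a haE ha.ne

end MeasureTheory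

section MeasurableFamily

variable {Ω α β : Type*} [MeasurableSpace Ω] [MeasurableSpace α] [MeasurableSpace β]

lemma Measurable.measure_smul {f : Ω → ℝ≥0∞} {μ : Ω → Measure α} (hf : Measurable f)
    (hμ : Measurable μ) : Measurable fun ω => f ω • μ ω :=
  Measure.measurable_of_measurable_coe _ fun s hs => by
    simp only [Measure.smul_apply, smul_eq_mul]
    exact hf.mul (Measure.measurable_coe hs |>.comp hμ)

lemma Measurable.measure_sub {μ ν : Ω → Measure α} [∀ ω, IsFiniteMeasure (ν ω)]
    (hμ : Measurable μ) (hν : Measurable ν) (hle : ∀ ω, ν ω ≤ μ ω) :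
    Measurable fun ω => μ ω - ν ω :=
  Measure.measurable_of_measurable_coe _ fun s hs => by
    simp_rw [Measure.sub_apply hs (hle _)]
    exact (Measure.measurable_coe hs |>.comp hμ).sub (Measure.measurable_coe hs |>.comp hν)

lemma Measurable.measure_prod {μ : Ω → Measure α} {ν : Ω → Measure β}
    [∀ ω, IsFiniteMeasure (μ ω)] [∀ ω, IsFiniteMeasure (ν ω)] (hμ : Measurable μ)
    (hν : Measurable ν) : Measurable fun ω => (μ ω).prod (ν ω) := by
  have hrect : ∀ s t, MeasurableSet s → MeasurableSet t →
      Measurable fun ω => (μ ω).prod (ν ω) (s ×ˢ t) := fun s t hs ht => by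
    simp_rw [Measure.prod_prod]
    exact (Measure.measurable_coe hs |>.comp hμ).mul (Measure.measurable_coe ht |>.comp hν)
  refine .measure_of_isPiSystem generateFrom_prod.symm isPiSystem_prod ?_ ?_
  · rintro _ ⟨s, hs, t, ht, rfl⟩
    exact hrect s t hs ht
  · simpa only [Set.univ_prod_univ] using hrect _ _ MeasurableSet.univ MeasurableSet.univ

end MeasurableFamily

namespace ProbabilityTheory.Kernel

variable {Ω X Y : Type*} [MeasurableSpace Ω] [MeasurableSpace X] [MeasurableSpace Y]
  {E : Set Ω} [DecidablePred (· ∈ E)] (hE : MeasurableSet E)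

lemma piecewise_self (κ : Kernel Ω X) : piecewise hE κ κ = κ := by
  ext1 ω
  rw [piecewise_apply, ite_self]

lemma fst_piecewise (κ η : Kernel Ω (X × Y)) :
    (piecewise hE κ η).fst = piecewise hE κ.fst η.fst := by
  ext1 ω
  simp only [fst_apply, piecewise_apply]
  split_ifs <;> rfl

lemma snd_piecewise (κ η : Kernel Ω (X × Y)) :
    (piecewise hE κ η).snd = piecewise hE κ.snd η.snd := by
  ext1 ω
  simp only [snd_apply, piecewise_apply]
  split_ifs <;> rfl

end ProbabilityTheory.Kernel

namespace MeasureTheory.Measure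

variable {X Y : Type*} [MeasurableSpace X] [MeasurableSpace Y] {N : ℕ}
  (m : Measure (X × Y)) (B : Fin (N + 1) → Set (X × Y))

/-- Small enough that `m.cycleRemoved B ≤ m`; zero as soon as one of the sets `B i` is null. -/
noncomputable def cycleWeight : ℝ≥0∞ := (⨅ i, m (B i)) / (N + 1)

noncomputable def cycleRemoved : Measure (X × Y) := m.cycleWeight B • ∑ i, m[|B i]

noncomputable def cycleAdded : Measure (X × Y) :=
  m.cycleWeight B • ∑ i, (m[|B i]).fst.prod (m[|B (i + 1)]).snd

noncomputable def cycleRearrange : Measure (X × Y) := m - m.cycleRemoved B + m.cycleAdded B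

variable {m B}

lemma cycleWeight_mul_inv_le (i : Fin (N + 1)) :
    m.cycleWeight B * (m (B i))⁻¹ ≤ ((N : ℝ≥0∞) + 1)⁻¹ :=
  calc m.cycleWeight B * (m (B i))⁻¹ ≤ m (B i) / (N + 1) * (m (B i))⁻¹ := by
        unfold cycleWeight; gcongr; exact iInf_le _ i
    _ = ((N : ℝ≥0∞) + 1)⁻¹ * (m (B i) * (m (B i))⁻¹) := by rw [ENNReal.div_eq_inv_mul, mul_assoc]
    _ ≤ ((N : ℝ≥0∞) + 1)⁻¹ := mul_le_of_le_one_right' (ENNReal.mul_inv_le_one _)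

lemma cycleWeight_ne_zero (hpos : ∀ i, m (B i) ≠ 0) : m.cycleWeight B ≠ 0 := by
  obtain ⟨i, hi⟩ := exists_eq_ciInf_of_finite (f := fun i => m (B i))
  rw [cycleWeight, ← hi]
  exact ENNReal.div_ne_zero.2 ⟨hpos i, by simp⟩

lemma cycleWeight_ne_top [IsFiniteMeasure m] : m.cycleWeight B ≠ ∞ :=
  ENNReal.div_ne_top (ne_top_of_le_ne_top (measure_ne_top m (B 0)) (iInf_le _ 0)) (by simp)

variable (m B) in
lemma cycleRemoved_le : m.cycleRemoved B ≤ m := by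
  intro s
  have hterm : ∀ i, m.cycleWeight B * m[|B i] s ≤ ((N : ℝ≥0∞) + 1)⁻¹ * m s := fun i => by
    rw [ProbabilityTheory.cond, smul_apply, smul_eq_mul, ← mul_assoc]
    exact mul_le_mul' (cycleWeight_mul_inv_le i) (restrict_le_self s)
  calc m.cycleRemoved B s = ∑ i, m.cycleWeight B * m[|B i] s := by
        simp [cycleRemoved, finsetSum_apply, Finset.mul_sum]
    _ ≤ ∑ _i : Fin (N + 1), ((N : ℝ≥0∞) + 1)⁻¹ * m s := Finset.sum_le_sum fun i _ => hterm i
    _ = m s := by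
        rw [Finset.sum_const, Finset.card_univ, Fintype.card_fin, nsmul_eq_mul, ← mul_assoc,
          Nat.cast_add_one, ENNReal.mul_inv_cancel (by simp) (by simp), one_mul]

lemma cycleRearrange_of_exists_eq_zero (h : ∃ i, m (B i) = 0) : m.cycleRearrange B = m := by
  obtain ⟨i, hi⟩ := h
  have hw : m.cycleWeight B = 0 := by
    rw [cycleWeight, nonpos_iff_eq_zero.1 ((iInf_le _ i).trans hi.le), ENNReal.zero_div]
  simp [cycleRearrange, cycleRemoved, cycleAdded, hw]

lemma lintegral_cycleAdded_le_mul_sum {U : Fin (N + 1) → Set X} {V : Fin (N + 1) → Set Y}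
    (hU : ∀ i, MeasurableSet (U i)) (hV : ∀ i, MeasurableSet (V i))
    (hB : ∀ i, B i = U i ×ˢ V i) {f : X × Y → ℝ≥0∞} {b : Fin (N + 1) → ℝ≥0∞}
    (hb : ∀ i, ∀ q ∈ U i ×ˢ V (i + 1), f q ≤ b i) :
    ∫⁻ q, f q ∂(m.cycleAdded B) ≤ m.cycleWeight B * ∑ i, b i := by
  rw [cycleAdded, lintegral_smul_measure, lintegral_finsetSum_measure, smul_eq_mul]
  gcongr with i
  have hfst : ∀ᵐ x ∂(m[|B i]).fst, x ∈ U i :=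
    (ae_map_iff measurable_fst.aemeasurable (hU i)).2 <|
      (ae_cond_mem (hB i ▸ (hU i).prod (hV i))).mono fun q hq => (hB i ▸ hq).1
  have hsnd : ∀ᵐ y ∂(m[|B (i + 1)]).snd, y ∈ V (i + 1) :=
    (ae_map_iff measurable_snd.aemeasurable (hV (i + 1))).2 <|
      (ae_cond_mem (hB (i + 1) ▸ (hU (i + 1)).prod (hV (i + 1)))).mono
        fun q hq => (hB (i + 1) ▸ hq).2
  have hbox : ∀ᵐ q ∂(m[|B i]).fst.prod (m[|B (i + 1)]).snd, q ∈ U i ×ˢ V (i + 1) :=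
    (quasiMeasurePreserving_fst.ae hfst).and (quasiMeasurePreserving_snd.ae hsnd)
  calc ∫⁻ q, f q ∂(m[|B i]).fst.prod (m[|B (i + 1)]).snd
      ≤ ∫⁻ _, b i ∂(m[|B i]).fst.prod (m[|B (i + 1)]).snd := lintegral_mono_ae (hbox.mono (hb i))
    _ ≤ b i := by
        rw [lintegral_const, ← Set.univ_prod_univ, prod_prod]
        exact mul_le_of_le_one_right' (mul_le_one' prob_le_one prob_le_one)

variable [IsFiniteMeasure m]

instance : IsFiniteMeasure (m.cycleRemoved B) := isFiniteMeasure_of_le m (cycleRemoved_le m B)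

lemma mul_sum_le_lintegral_cycleRemoved (hpos : ∀ i, m (B i) ≠ 0) (hB : ∀ i, MeasurableSet (B i))
    {f : X × Y → ℝ≥0∞} {a : Fin (N + 1) → ℝ≥0∞} (ha : ∀ i, ∀ q ∈ B i, a i ≤ f q) :
    m.cycleWeight B * ∑ i, a i ≤ ∫⁻ q, f q ∂(m.cycleRemoved B) := by
  rw [cycleRemoved, lintegral_smul_measure, lintegral_finsetSum_measure, smul_eq_mul]
  gcongr with i
  have := cond_isProbabilityMeasure (hpos i)
  calc a i = ∫⁻ _, a i ∂m[|B i] := by rw [lintegral_const, measure_univ, mul_one]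
    _ ≤ ∫⁻ q, f q ∂m[|B i] := lintegral_mono_ae (ae_cond_of_forall_mem (hB i) (ha i))

lemma fst_cycleAdded (hpos : ∀ i, m (B i) ≠ 0) : (m.cycleAdded B).fst = (m.cycleRemoved B).fst := by
  have : ∀ i, IsProbabilityMeasure m[|B i] := fun i => cond_isProbabilityMeasure (hpos i)
  simp only [cycleAdded, cycleRemoved, Measure.fst, Measure.map_smul,
    Measure.map_finset_sum' measurable_fst.aemeasurable]
  simp only [map_fst_prod, measure_univ, one_smul]

lemma snd_cycleAdded (hpos : ∀ i, m (B i) ≠ 0) : (m.cycleAdded B).snd = (m.cycleRemoved B).snd := by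
  have : ∀ i, IsProbabilityMeasure m[|B i] := fun i => cond_isProbabilityMeasure (hpos i)
  simp only [cycleAdded, cycleRemoved, Measure.snd, Measure.map_smul,
    Measure.map_finset_sum' measurable_snd.aemeasurable]
  simp only [map_snd_prod, measure_univ, one_smul]
  exact congrArg _ (Equiv.sum_comp (Equiv.addRight 1) fun i => (m[|B i]).map Prod.snd)

lemma fst_cycleRearrange : (m.cycleRearrange B).fst = m.fst := by
  by_cases hpos : ∀ i, m (B i) ≠ 0
  · exact map_sub_add_of_map_eq (cycleRemoved_le m B) measurable_fst (fst_cycleAdded hpos)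
  · push Not at hpos
    rw [cycleRearrange_of_exists_eq_zero hpos]

lemma snd_cycleRearrange : (m.cycleRearrange B).snd = m.snd := by
  by_cases hpos : ∀ i, m (B i) ≠ 0
  · exact map_sub_add_of_map_eq (cycleRemoved_le m B) measurable_snd (snd_cycleAdded hpos)
  · push Not at hpos
    rw [cycleRearrange_of_exists_eq_zero hpos]

lemma lintegral_cycleRearrange_lt {f : X × Y → ℝ≥0∞} (hfin : ∫⁻ q, f q ∂m ≠ ∞)
    (hpos : ∀ i, m (B i) ≠ 0) {U : Fin (N + 1) → Set X} {V : Fin (N + 1) → Set Y}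
    (hU : ∀ i, MeasurableSet (U i)) (hV : ∀ i, MeasurableSet (V i)) (hB : ∀ i, B i = U i ×ˢ V i)
    {a b : Fin (N + 1) → ℝ≥0∞} (hab : ∑ i, b i < ∑ i, a i) (ha : ∀ i, ∀ q ∈ B i, a i ≤ f q)
    (hb : ∀ i, ∀ q ∈ U i ×ˢ V (i + 1), f q ≤ b i) :
    ∫⁻ q, f q ∂(m.cycleRearrange B) < ∫⁻ q, f q ∂m := by
  refine lintegral_sub_add_measure_lt (cycleRemoved_le m B) hfin ?_
  calc ∫⁻ q, f q ∂(m.cycleAdded B) ≤ m.cycleWeight B * ∑ i, b i :=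
        lintegral_cycleAdded_le_mul_sum hU hV hB hb
    _ < m.cycleWeight B * ∑ i, a i :=
        (ENNReal.mul_lt_mul_iff_right (cycleWeight_ne_zero hpos) cycleWeight_ne_top).2 hab
    _ ≤ ∫⁻ q, f q ∂(m.cycleRemoved B) :=
        mul_sum_le_lintegral_cycleRemoved hpos (fun i => hB i ▸ (hU i).prod (hV i)) ha

end MeasureTheory.Measure

namespace ProbabilityTheory.Kernel

variable {Ω X Y : Type*} [MeasurableSpace Ω] [MeasurableSpace X] [MeasurableSpace Y] {N : ℕ}
  (κ : Kernel Ω (X × Y)) {B : Fin (N + 1) → Set (X × Y)}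

lemma measurable_cycleWeight (hB : ∀ i, MeasurableSet (B i)) :
    Measurable fun ω => (κ ω).cycleWeight B :=
  (Measurable.iInf fun i => κ.measurable_coe (hB i)).div_const _

variable [IsFiniteKernel κ]

lemma measurable_cycleRearrange (hB : ∀ i, MeasurableSet (B i)) :
    Measurable fun ω => (κ ω).cycleRearrange B := by
  have hcond : ∀ i, Measurable fun ω => (κ ω)[|B i] := fun i =>
    (Measure.measurable_cond (hB i)).comp κ.measurable
  have hfst : ∀ i, Measurable fun ω => ((κ ω)[|B i]).fst := fun i =>
    (Measure.measurable_map _ measurable_fst).comp (hcond i)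
  have hsnd : ∀ i, Measurable fun ω => ((κ ω)[|B i]).snd := fun i =>
    (Measure.measurable_map _ measurable_snd).comp (hcond i)
  have hremoved : Measurable fun ω => (κ ω).cycleRemoved B :=
    (κ.measurable_cycleWeight hB).measure_smul (Finset.measurable_sum _ fun i _ => hcond i)
  have hadded : Measurable fun ω => (κ ω).cycleAdded B :=
    (κ.measurable_cycleWeight hB).measure_smul <| Finset.measurable_sum _ fun i _ =>
      (hfst i).measure_prod (hsnd (i + 1))
  exact (κ.measurable.measure_sub hremoved fun ω => Measure.cycleRemoved_le _ _).add hadded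

noncomputable def cycleRearrange (hB : ∀ i, MeasurableSet (B i)) : Kernel Ω (X × Y) :=
  ⟨fun ω => (κ ω).cycleRearrange B, κ.measurable_cycleRearrange hB⟩

lemma cycleRearrange_apply (hB : ∀ i, MeasurableSet (B i)) (ω : Ω) :
    κ.cycleRearrange hB ω = (κ ω).cycleRearrange B := rfl

lemma fst_cycleRearrange (hB : ∀ i, MeasurableSet (B i)) : (κ.cycleRearrange hB).fst = κ.fst := by
  ext1 ω
  rw [fst_apply, fst_apply, cycleRearrange_apply]
  exact Measure.fst_cycleRearrange

lemma snd_cycleRearrange (hB : ∀ i, MeasurableSet (B i)) : (κ.cycleRearrange hB).snd = κ.snd := by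
  ext1 ω
  rw [snd_apply, snd_apply, cycleRearrange_apply]
  exact Measure.snd_cycleRearrange

instance {hB : ∀ i, MeasurableSet (B i)} [IsMarkovKernel κ] :
    IsMarkovKernel (κ.cycleRearrange hB) :=
  ⟨fun ω => ⟨by rw [cycleRearrange_apply, ← Measure.fst_univ, Measure.fst_cycleRearrange,
    Measure.fst_univ, measure_univ]⟩⟩

end ProbabilityTheory.Kernel

section CycleObstruction

variable {X Y : Type*} [MeasurableSpace X] [MeasurableSpace Y] {N : ℕ}

def CycleObstruction (m : Measure (X × Y)) (g : X → Y → ℝ) (U : Fin (N + 1) → Set X)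
    (V : Fin (N + 1) → Set Y) (s t : Fin (N + 1) → ℝ) : Prop :=
  ∑ i, s i < ∑ i, t i ∧ ∀ i, m (U i ×ˢ V i) ≠ 0 ∧ (∀ q ∈ U i ×ˢ V i, t i ≤ g q.1 q.2) ∧
    ∀ q ∈ U i ×ˢ V (i + 1), g q.1 q.2 ≤ s i

variable {m : Measure (X × Y)} {g : X → Y → ℝ} {U : Fin (N + 1) → Set X}
  {V : Fin (N + 1) → Set Y} {s t : Fin (N + 1) → ℝ}

lemma CycleObstruction.upper_nonneg (h : CycleObstruction m g U V s t) (hg : ∀ x y, 0 ≤ g x y)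
    (i : Fin (N + 1)) : 0 ≤ s i := by
  obtain ⟨q, hq⟩ := nonempty_of_measure_ne_zero (h.2 i).1
  obtain ⟨q', hq'⟩ := nonempty_of_measure_ne_zero (h.2 (i + 1)).1
  exact (hg q.1 q'.2).trans ((h.2 i).2.2 (q.1, q'.2) ⟨hq.1, hq'.2⟩)

lemma CycleObstruction.lintegral_cycleRearrange_lt [IsFiniteMeasure m]
    (h : CycleObstruction m g U V s t) (hg : ∀ x y, 0 ≤ g x y)
    (hU : ∀ i, MeasurableSet (U i)) (hV : ∀ i, MeasurableSet (V i))
    (hfin : ∫⁻ q, ENNReal.ofReal (g q.1 q.2) ∂m ≠ ∞) :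
    ∫⁻ q, ENNReal.ofReal (g q.1 q.2) ∂(m.cycleRearrange fun i => U i ×ˢ V i)
      < ∫⁻ q, ENNReal.ofReal (g q.1 q.2) ∂m :=
  Measure.lintegral_cycleRearrange_lt hfin (fun i => (h.2 i).1) hU hV (fun _ => rfl)
    (ENNReal.sum_ofReal_lt_sum_ofReal (fun i _ => h.upper_nonneg hg i) h.1)
    (fun i q hq => ENNReal.ofReal_le_ofReal ((h.2 i).2.1 q hq))
    (fun i q hq => ENNReal.ofReal_le_ofReal ((h.2 i).2.2 q hq))

lemma measurableSet_setOf_cycleObstruction {Ω : Type*} [MeasurableSpace Ω] [TopologicalSpace X]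
    [SeparableSpace X] [OpensMeasurableSpace X] [TopologicalSpace Y] [SeparableSpace Y]
    [OpensMeasurableSpace Y] (κ : Kernel Ω (X × Y)) {c : Ω → X → Y → ℝ}
    (hc_cont : ∀ ω, Continuous fun q : X × Y => c ω q.1 q.2)
    (hc_meas : ∀ x y, Measurable fun ω => c ω x y) {U : Fin (N + 1) → Set X}
    {V : Fin (N + 1) → Set Y} (hU : ∀ i, IsOpen (U i)) (hV : ∀ i, IsOpen (V i))
    (s t : Fin (N + 1) → ℝ) : MeasurableSet {ω | CycleObstruction (κ ω) (c ω) U V s t} := by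
  have hbox : ∀ {W : Set (X × Y)}, IsOpen W → ∀ {F : Set ℝ}, IsClosed F →
      MeasurableSet {ω | ∀ q ∈ W, c ω q.1 q.2 ∈ F} := fun hW _ hF =>
    measurableSet_setOf_forall_mem_of_continuous hc_cont (fun q => hc_meas q.1 q.2) hW hF
  refine measurableSet_setOfPred.2 <| measurable_const.and <| .forall fun i =>
    .and ?_ (.and ?_ ?_) <;> refine measurableSet_setOfPred.1 ?_
  · exact (κ.measurable_coe ((hU i).measurableSet.prod (hV i).measurableSet))
      (measurableSet_singleton 0).compl
  · exact hbox ((hU i).prod (hV i)) isClosed_Ici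
  · exact hbox ((hU i).prod (hV (i + 1))) isClosed_Iic

lemma exists_cycleObstruction_of_not_cyclicallyMonotone [TopologicalSpace X]
    [SecondCountableTopology X] [TopologicalSpace Y] [SecondCountableTopology Y]
    (hg : Continuous fun q : X × Y => g q.1 q.2) (h : ¬ CyclicallyMonotone g (measureSupport m)) :
    ∃ (N : ℕ) (U : Fin (N + 1) → Set X) (V : Fin (N + 1) → Set Y) (s t : Fin (N + 1) → ℚ),
      (∀ i, U i ∈ countableBasis X) ∧ (∀ i, V i ∈ countableBasis Y) ∧
      CycleObstruction m g U V (fun i => s i) (fun i => t i) := by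
  simp only [CyclicallyMonotone, not_forall, not_le] at h
  obtain ⟨N, p, hp, hlt⟩ := h
  obtain ⟨s, t, hs, ht, hst⟩ := exists_rat_sum_lt_sum hlt
  have hlow : ∀ i, {q : X × Y | t i < g q.1 q.2} ∈ 𝓝 ((p i).1, (p i).2) := fun i =>
    (isOpen_lt continuous_const hg).mem_nhds (ht i)
  have hup : ∀ i, {q : X × Y | g q.1 q.2 < s i} ∈ 𝓝 ((p i).1, (p (i + 1)).2) := fun i =>
    (isOpen_lt hg continuous_const).mem_nhds (hs i)
  simp only [mem_nhds_prod_iff] at hlow hup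
  choose u₁ hu₁ v₁ hv₁ hlow using hlow
  choose u₂ hu₂ v₂ hv₂ hup using hup
  have hU : ∀ i, ∃ U ∈ countableBasis X, (p i).1 ∈ U ∧ U ⊆ u₁ i ∩ u₂ i := fun i =>
    (isBasis_countableBasis X).mem_nhds_iff.1 (inter_mem (hu₁ i) (hu₂ i))
  have hV : ∀ i, ∃ V ∈ countableBasis Y, (p i).2 ∈ V ∧ V ⊆ v₁ i ∩ v₂ (i - 1) := fun i =>
    (isBasis_countableBasis Y).mem_nhds_iff.1 (inter_mem (hv₁ i) (by simpa using hv₂ (i - 1)))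
  choose U hUb hpU hUu using hU
  choose V hVb hpV hVv using hV
  refine ⟨N, U, V, s, t, hUb, hVb, hst, fun i => ⟨?_, fun q hq => ?_, fun q hq => ?_⟩⟩
  · exact hp i _ (((isBasis_countableBasis X).isOpen (hUb i)).prod
      ((isBasis_countableBasis Y).isOpen (hVb i))) ⟨hpU i, hpV i⟩
  · exact (hlow i ⟨(hUu i hq.1).1, (hVv i hq.2).1⟩).le
  · have hq₂ := (hVv (i + 1) hq.2).2
    rw [add_sub_cancel_right] at hq₂
    exact (hup i ⟨(hUu i hq.1).2, hq₂⟩).le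

end CycleObstruction

noncomputable def kernelCost {Ω X Y : Type*} [MeasurableSpace Ω] [MeasurableSpace X]
    [MeasurableSpace Y] (P : Measure Ω) (c : Ω → X → Y → ℝ) (κ : Kernel Ω (X × Y)) : ℝ≥0∞ :=
  ∫⁻ ω, ∫⁻ q, ENNReal.ofReal (c ω q.1 q.2) ∂(κ ω) ∂P

section OptimalPlan

variable {Ω X Y : Type*} [MeasurableSpace Ω]
  [TopologicalSpace X] [SecondCountableTopology X] [MetrizableSpace X] [MeasurableSpace X]
  [BorelSpace X] [TopologicalSpace Y] [SecondCountableTopology Y] [MetrizableSpace Y]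
  [MeasurableSpace Y] [BorelSpace Y] {c : Ω → X → Y → ℝ}

lemma measurable_lintegral_kernel_ofReal (κ : Kernel Ω (X × Y)) [IsSFiniteKernel κ]
    (hc_cont : ∀ ω, Continuous fun q : X × Y => c ω q.1 q.2)
    (hc_meas : ∀ x y, Measurable fun ω => c ω x y) :
    Measurable fun ω => ∫⁻ q, ENNReal.ofReal (c ω q.1 q.2) ∂κ ω := by
  have hjoint : Measurable fun p : Ω × (X × Y) => ENNReal.ofReal (c p.1 p.2.1 p.2.2) :=
    ENNReal.measurable_ofReal.comp <| (measurable_uncurry_of_continuous_of_measurable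
      (u := fun (q : X × Y) ω => c ω q.1 q.2) hc_cont fun q => hc_meas q.1 q.2).comp
        measurable_swap
  exact hjoint.lintegral_kernel_prod_right'

lemma measure_setOf_cycleObstruction_eq_zero {P : Measure Ω}
    (hc_nonneg : ∀ ω x y, 0 ≤ c ω x y) (hc_cont : ∀ ω, Continuous fun q : X × Y => c ω q.1 q.2)
    (hc_meas : ∀ x y, Measurable fun ω => c ω x y) {π : Kernel Ω (X × Y)} [IsMarkovKernel π]
    (hopt : ∀ ρ : Kernel Ω (X × Y), IsMarkovKernel ρ → ρ.fst = π.fst → ρ.snd = π.snd →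
      kernelCost P c π ≤ kernelCost P c ρ)
    (hfin : kernelCost P c π ≠ ∞) {N : ℕ} {U : Fin (N + 1) → Set X} {V : Fin (N + 1) → Set Y}
    (hU : ∀ i, IsOpen (U i)) (hV : ∀ i, IsOpen (V i)) (s t : Fin (N + 1) → ℝ) :
    P {ω | CycleObstruction (π ω) (c ω) U V s t} = 0 := by
  classical
  set E := {ω | CycleObstruction (π ω) (c ω) U V s t}
  have hE : MeasurableSet E := measurableSet_setOf_cycleObstruction π hc_cont hc_meas hU hV s t
  have hB : ∀ i, MeasurableSet (U i ×ˢ V i) := fun i =>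
    (hU i).measurableSet.prod (hV i).measurableSet
  set ρ := Kernel.piecewise hE (π.cycleRearrange hB) π
  have hlt : ∀ ω ∈ E, ∫⁻ q, ENNReal.ofReal (c ω q.1 q.2) ∂π ω ≠ ∞ →
      ∫⁻ q, ENNReal.ofReal (c ω q.1 q.2) ∂ρ ω < ∫⁻ q, ENNReal.ofReal (c ω q.1 q.2) ∂π ω :=
    fun ω hω hfin => by
      rw [Kernel.piecewise_apply, if_pos hω, Kernel.cycleRearrange_apply]
      exact hω.lintegral_cycleRearrange_lt (hc_nonneg ω) (fun i => (hU i).measurableSet)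
        (fun i => (hV i).measurableSet) hfin
  have hle : ∀ ω, ∫⁻ q, ENNReal.ofReal (c ω q.1 q.2) ∂ρ ω
      ≤ ∫⁻ q, ENNReal.ofReal (c ω q.1 q.2) ∂π ω := fun ω => by
    by_cases hω : ω ∈ E
    · by_cases hfin : ∫⁻ q, ENNReal.ofReal (c ω q.1 q.2) ∂π ω = ∞
      · exact hfin ▸ le_top
      · exact (hlt ω hω hfin).le
    · rw [Kernel.piecewise_apply, if_neg hω]
  have hρfst : ρ.fst = π.fst := by
    rw [Kernel.fst_piecewise, Kernel.fst_cycleRearrange, Kernel.piecewise_self]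
  have hρsnd : ρ.snd = π.snd := by
    rw [Kernel.snd_piecewise, Kernel.snd_cycleRearrange, Kernel.piecewise_self]
  exact measure_eq_zero_of_lintegral_le_of_lt
    (measurable_lintegral_kernel_ofReal π hc_cont hc_meas).aemeasurable hfin hle hlt
    (hopt ρ inferInstance hρfst hρsnd)

end OptimalPlan

theorem support_cyclically_monotone_of_optimal_general
    {Ω X Y : Type*} [MeasurableSpace Ω]
    [TopologicalSpace X] [PolishSpace X] [MeasurableSpace X] [BorelSpace X]
    [TopologicalSpace Y] [PolishSpace Y] [MeasurableSpace Y] [BorelSpace Y]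
    (P : Measure Ω)
    (μ : Kernel Ω X) [IsMarkovKernel μ] (ν : Kernel Ω Y) [IsMarkovKernel ν]
    (c : Ω → X → Y → ℝ)
    (hc_nonneg : ∀ ω x y, 0 ≤ c ω x y)
    (hc_cont : ∀ ω, Continuous (fun q : X × Y => c ω q.1 q.2))
    (hc_meas : ∀ x y, Measurable (fun ω => c ω x y))
    (hint : ∫⁻ ω, ∫⁻ q, ENNReal.ofReal (c ω q.1 q.2) ∂((μ ω).prod (ν ω)) ∂P < ⊤)
    (π : Kernel Ω (X × Y)) [IsMarkovKernel π] (hπfst : π.fst = μ) (hπsnd : π.snd = ν)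
    (hopt : ∫⁻ ω, ∫⁻ q, ENNReal.ofReal (c ω q.1 q.2) ∂(π ω) ∂P = stochCost P c μ ν) :
    ∀ᵐ ω ∂P, CyclicallyMonotone (c ω) (measureSupport (π ω)) := by
  have hopt' : ∀ ρ : Kernel Ω (X × Y), IsMarkovKernel ρ → ρ.fst = π.fst → ρ.snd = π.snd →
      kernelCost P c π ≤ kernelCost P c ρ := fun ρ hρ hfst hsnd =>
    hopt.trans_le (iInf₂_le ρ ⟨hρ, hfst.trans hπfst, hsnd.trans hπsnd⟩)
  have hfin : kernelCost P c π ≠ ∞ := by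
    refine ne_top_of_le_ne_top hint.ne <| (hopt' (μ ×ₖ ν) inferInstance ?_ ?_).trans_eq ?_
    · rw [Kernel.fst_prod, hπfst]
    · rw [Kernel.snd_prod, hπsnd]
    · simp only [kernelCost, Kernel.prod_apply]
  have hcover : {ω | ¬ CyclicallyMonotone (c ω) (measureSupport (π ω))} ⊆
      ⋃ (N : ℕ) (U : Fin (N + 1) → countableBasis X) (V : Fin (N + 1) → countableBasis Y)
        (s : Fin (N + 1) → ℚ) (t : Fin (N + 1) → ℚ),
        {ω | CycleObstruction (π ω) (c ω) (fun i => U i) (fun i => V i) (fun i => s i)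
          (fun i => t i)} := fun ω hω => by
    obtain ⟨N, U, V, s, t, hU, hV, h⟩ :=
      exists_cycleObstruction_of_not_cyclicallyMonotone (hc_cont ω) hω
    simp only [Set.mem_iUnion]
    exact ⟨N, fun i => ⟨U i, hU i⟩, fun i => ⟨V i, hV i⟩, s, t, h⟩
  refine ae_iff.2 (measure_mono_null hcover ?_)
  simp only [measure_iUnion_null_iff]
  exact fun N U V s t => measure_setOf_cycleObstruction_eq_zero hc_nonneg hc_cont hc_meas hopt'
    hfin (fun i => (isBasis_countableBasis X).isOpen (U i).2)
    (fun i => (isBasis_countableBasis Y).isOpen (V i).2) _ _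

/-- **Optimal plans have cyclically monotone supports.**
If `π ∈ K(μ,ν)` is a stochastic optimal transference plan, then for `P`-almost all `ω`
the support of `π_ω` is a `c(ω,·,·)`-cyclically monotone subset of `X × Y`. -/
theorem support_cyclically_monotone_of_optimal
    {Ω X Y : Type*} [MeasurableSpace Ω]
    [TopologicalSpace X] [PolishSpace X] [MeasurableSpace X] [BorelSpace X]
    [TopologicalSpace Y] [PolishSpace Y] [MeasurableSpace Y] [BorelSpace Y]
    (P : Measure Ω) [IsProbabilityMeasure P]
    (μ : Kernel Ω X) [IsMarkovKernel μ] (ν : Kernel Ω Y) [IsMarkovKernel ν]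
    (c : Ω → X → Y → ℝ)
    (hc_nonneg : ∀ ω x y, 0 ≤ c ω x y)
    (hc_cont : ∀ ω, Continuous (fun q : X × Y => c ω q.1 q.2))
    (hc_meas : ∀ x y, Measurable (fun ω => c ω x y))
    (hint : ∫⁻ ω, ∫⁻ q, ENNReal.ofReal (c ω q.1 q.2) ∂((μ ω).prod (ν ω)) ∂P < ⊤)
    (π : Kernel Ω (X × Y)) [IsMarkovKernel π] (hπfst : π.fst = μ) (hπsnd : π.snd = ν)
    (hopt : ∫⁻ ω, ∫⁻ q, ENNReal.ofReal (c ω q.1 q.2) ∂(π ω) ∂P = stochCost P c μ ν) :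
    ∀ᵐ ω ∂P, CyclicallyMonotone (c ω) (measureSupport (π ω)) :=
  support_cyclically_monotone_of_optimal_general P μ ν c hc_nonneg hc_cont hc_meas hint π hπfst
    hπsnd hopt
end

section
/- Let X and Y be Polish spaces, (Ω,F,P) a probability space, μ a probability kernel from Ω to X, ν a probability kernel from Ω to Y, and c : Ω×X×Y → [0,∞) a function such that for each ω the map (x,y) ↦ c(ω,x,y) is continuous, for each (x,y) the map ω ↦ c(ω,x,y) is F-measurable, and E ∫_{X×Y} c(ω,x,y) μ_ω(dx) ν_ω(dy) < +∞. Suppose π ∈ K(μ,ν) and there exist jointly measurable functions ψ on Ω×X and φ on Ω×Y with φ(ω,y) − ψ(ω,x) ≤ c(ω,x,y) for all (ω,x,y), such that for each ω the set Γ_ω := {(x,y) : φ(ω,y) − ψ(ω,x) = c(ω,x,y)} has π_ω-full measure. Then π is a stochastic optimal transference plan, i.e. E ∫ c(ω,x,y) π_ω(dx,dy) = C^stoch(c,μ,ν). -/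
/-!
On the contact set `Γ_ω` the cost equals `φ(ω,y) − ψ(ω,x)`, so `∫ c dπ_ω = ∫ (φ − ψ) dπ_ω`,
an integral that only sees the marginals of `π_ω`; for any competitor `π'` it therefore equals
`∫ (φ − ψ) dπ'_ω ≤ ∫ c dπ'_ω`. As `φ` and `ψ` need not be integrable, this is done for the
truncations `clamp n ∘ φ − clamp n ∘ ψ`, which are bounded, nonnegative on the contact set and
below `(φ − ψ)⁺`, and then passed to the limit `n → ∞` with Fatou's lemma.
-/

open MeasureTheory ProbabilityTheory Filter ENNReal

def clamp (n : ℕ) (t : ℝ) : ℝ := max (min t n) (-n)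

lemma clamp_monotone (n : ℕ) : Monotone (clamp n) :=
  fun _ _ h => max_le_max (min_le_min h le_rfl) le_rfl

lemma abs_clamp_le (n : ℕ) (t : ℝ) : |clamp n t| ≤ n := by
  unfold clamp; rw [abs_le]; grind

lemma clamp_sub_clamp_le (n : ℕ) (a b : ℝ) : clamp n a - clamp n b ≤ max (a - b) 0 := by
  unfold clamp; grind

lemma ofReal_clamp_sub_clamp_le (n : ℕ) (a b : ℝ) :
    ENNReal.ofReal (clamp n a - clamp n b) ≤ ENNReal.ofReal (a - b) := by
  simpa using ENNReal.ofReal_le_ofReal (clamp_sub_clamp_le n a b)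

@[fun_prop]
lemma measurable_clamp (n : ℕ) : Measurable (clamp n) := by
  unfold clamp; fun_prop

lemma tendsto_clamp (t : ℝ) : Tendsto (fun n : ℕ => clamp n t) atTop (nhds t) := by
  refine tendsto_const_nhds.congr' ?_
  filter_upwards [eventually_ge_atTop ⌈|t|⌉₊] with n hn
  have ht : |t| ≤ n := (Nat.le_ceil _).trans (by exact_mod_cast hn)
  rw [abs_le] at ht
  simp only [clamp, min_eq_left ht.2, max_eq_left ht.1]

lemma ofReal_integral_le_lintegral_ofReal {α : Type*} [MeasurableSpace α] {μ : Measure α}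
    {f : α → ℝ} (hf : Integrable f μ) :
    ENNReal.ofReal (∫ x, f x ∂μ) ≤ ∫⁻ x, ENNReal.ofReal (f x) ∂μ := by
  rw [integral_eq_lintegral_pos_part_sub_lintegral_neg_part hf]
  exact (ENNReal.ofReal_le_ofReal (sub_le_self _ toReal_nonneg)).trans ENNReal.ofReal_toReal_le

section

variable {X Y : Type*} [MeasurableSpace X] [MeasurableSpace Y] {p p' : Measure (X × Y)}

lemma integrable_comp_snd_sub_comp_fst {f : X → ℝ} {g : Y → ℝ}
    (hf : Integrable f p.fst) (hg : Integrable g p.snd) :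
    Integrable (fun q => g q.2 - f q.1) p :=
  (hg.comp_measurable measurable_snd).sub (hf.comp_measurable measurable_fst)

lemma integral_comp_snd_sub_comp_fst {f : X → ℝ} {g : Y → ℝ}
    (hf : Integrable f p.fst) (hg : Integrable g p.snd) :
    ∫ q, g q.2 - f q.1 ∂p = ∫ y, g y ∂p.snd - ∫ x, f x ∂p.fst := by
  rw [integral_sub (f := fun q : X × Y => g q.2) (g := fun q => f q.1)
      (hg.comp_measurable measurable_snd) (hf.comp_measurable measurable_fst), Measure.fst,
    Measure.snd, integral_map measurable_snd.aemeasurable hg.1,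
    integral_map measurable_fst.aemeasurable hf.1]

lemma lintegral_ofReal_sub_le_of_integrable (hfst : p.fst = p'.fst) (hsnd : p.snd = p'.snd)
    {f : X → ℝ} {g : Y → ℝ} (hf : Integrable f p.fst) (hg : Integrable g p.snd)
    (hfg : ∀ᵐ q ∂p, f q.1 ≤ g q.2) :
    ∫⁻ q, ENNReal.ofReal (g q.2 - f q.1) ∂p ≤ ∫⁻ q, ENNReal.ofReal (g q.2 - f q.1) ∂p' := by
  have hf' : Integrable f p'.fst := hfst ▸ hf
  have hg' : Integrable g p'.snd := hsnd ▸ hg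
  calc ∫⁻ q, ENNReal.ofReal (g q.2 - f q.1) ∂p
      = ENNReal.ofReal (∫ q, g q.2 - f q.1 ∂p) :=
        (ofReal_integral_eq_lintegral_ofReal (integrable_comp_snd_sub_comp_fst hf hg)
          (hfg.mono fun q hq => sub_nonneg.2 hq)).symm
    _ = ENNReal.ofReal (∫ q, g q.2 - f q.1 ∂p') := by
        rw [integral_comp_snd_sub_comp_fst hf hg, integral_comp_snd_sub_comp_fst hf' hg', hfst,
          hsnd]
    _ ≤ ∫⁻ q, ENNReal.ofReal (g q.2 - f q.1) ∂p' :=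
        ofReal_integral_le_lintegral_ofReal (integrable_comp_snd_sub_comp_fst hf' hg')

lemma integrable_clamp_comp {α : Type*} [MeasurableSpace α] {μ : Measure α} [IsFiniteMeasure μ]
    (n : ℕ) {f : α → ℝ} (hf : Measurable f) : Integrable (fun x => clamp n (f x)) μ :=
  .of_bound ((measurable_clamp n).comp hf).aestronglyMeasurable n
    (ae_of_all _ fun x => abs_clamp_le n (f x))

lemma lintegral_ofReal_sub_le_of_fst_eq_of_snd_eq [IsFiniteMeasure p] [IsFiniteMeasure p']
    (hfst : p.fst = p'.fst) (hsnd : p.snd = p'.snd)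
    {ψ : X → ℝ} {φ : Y → ℝ} (hψ : Measurable ψ) (hφ : Measurable φ)
    (hψφ : ∀ᵐ q ∂p, ψ q.1 ≤ φ q.2) :
    ∫⁻ q, ENNReal.ofReal (φ q.2 - ψ q.1) ∂p ≤ ∫⁻ q, ENNReal.ofReal (φ q.2 - ψ q.1) ∂p' := by
  set F : ℕ → X × Y → ℝ≥0∞ := fun n q => ENNReal.ofReal (clamp n (φ q.2) - clamp n (ψ q.1))
  have hF_lim : ∀ q, ENNReal.ofReal (φ q.2 - ψ q.1) = liminf (F · q) atTop := fun q =>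
    ((ENNReal.continuous_ofReal.tendsto _).comp
      ((tendsto_clamp (φ q.2)).sub (tendsto_clamp (ψ q.1)))).liminf_eq.symm
  have hF_le : ∀ n, ∫⁻ q, F n q ∂p ≤ ∫⁻ q, ENNReal.ofReal (φ q.2 - ψ q.1) ∂p' := fun n =>
    (lintegral_ofReal_sub_le_of_integrable hfst hsnd (integrable_clamp_comp n hψ)
      (integrable_clamp_comp n hφ) (hψφ.mono fun q hq => clamp_monotone n hq)).trans
      (lintegral_mono fun q => ofReal_clamp_sub_clamp_le n _ _)
  calc ∫⁻ q, ENNReal.ofReal (φ q.2 - ψ q.1) ∂p = ∫⁻ q, liminf (F · q) atTop ∂p :=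
        lintegral_congr hF_lim
    _ ≤ liminf (fun n => ∫⁻ q, F n q ∂p) atTop :=
        lintegral_liminf_le fun n => by simp only [F]; fun_prop
    _ ≤ _ := liminf_le_of_frequently_le' (Frequently.of_forall hF_le)

end

theorem optimal_of_dual_pair_general
    {Ω X Y : Type*} [MeasurableSpace Ω]
    [TopologicalSpace X] [PolishSpace X] [MeasurableSpace X] [BorelSpace X]
    [TopologicalSpace Y] [PolishSpace Y] [MeasurableSpace Y] [BorelSpace Y]
    (P : Measure Ω)
    (μ : Kernel Ω X) (ν : Kernel Ω Y)
    (c : Ω → X → Y → ℝ)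
    (hc_nonneg : ∀ ω x y, 0 ≤ c ω x y)
    (hc_cont : ∀ ω, Continuous (fun q : X × Y => c ω q.1 q.2))
    (π : Kernel Ω (X × Y)) [IsMarkovKernel π] (hπfst : π.fst = μ) (hπsnd : π.snd = ν)
    (ψ : Ω → X → ℝ) (φ : Ω → Y → ℝ)
    (hψ : Measurable (fun q : Ω × X => ψ q.1 q.2))
    (hφ : Measurable (fun q : Ω × Y => φ q.1 q.2))
    (hineq : ∀ ω x y, φ ω y - ψ ω x ≤ c ω x y)
    (hfull : ∀ ω, π ω {q : X × Y | φ ω q.2 - ψ ω q.1 = c ω q.1 q.2} = 1) :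
    ∫⁻ ω, ∫⁻ q, ENNReal.ofReal (c ω q.1 q.2) ∂(π ω) ∂P = stochCost P c μ ν := by
  refine le_antisymm (le_iInf₂ fun π' ⟨_, hπ'fst, hπ'snd⟩ => lintegral_mono fun ω => ?_)
    (iInf₂_le π ⟨inferInstance, hπfst, hπsnd⟩)
  have hψω : Measurable (ψ ω) := hψ.comp measurable_prodMk_left
  have hφω : Measurable (φ ω) := hφ.comp measurable_prodMk_left
  have hcontact : ∀ᵐ q ∂(π ω), φ ω q.2 - ψ ω q.1 = c ω q.1 q.2 := by
    refine (ae_iff_measure_eq (measurableSet_eq_fun (by fun_prop)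
      (hc_cont ω).measurable).nullMeasurableSet).2 ?_
    rw [hfull, measure_univ]
  have hfst : (π ω).fst = (π' ω).fst := by
    rw [Measure.fst, Measure.fst, ← Kernel.fst_apply, ← Kernel.fst_apply, hπfst, hπ'fst]
  have hsnd : (π ω).snd = (π' ω).snd := by
    rw [Measure.snd, Measure.snd, ← Kernel.snd_apply, ← Kernel.snd_apply, hπsnd, hπ'snd]
  calc ∫⁻ q, ENNReal.ofReal (c ω q.1 q.2) ∂(π ω)
      = ∫⁻ q, ENNReal.ofReal (φ ω q.2 - ψ ω q.1) ∂(π ω) :=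
        lintegral_congr_ae (hcontact.mono fun q hq => congrArg ENNReal.ofReal hq.symm)
    _ ≤ ∫⁻ q, ENNReal.ofReal (φ ω q.2 - ψ ω q.1) ∂(π' ω) :=
        lintegral_ofReal_sub_le_of_fst_eq_of_snd_eq hfst hsnd hψω hφω
          (hcontact.mono fun q hq => sub_nonneg.1 (hq ▸ hc_nonneg ω q.1 q.2))
    _ ≤ ∫⁻ q, ENNReal.ofReal (c ω q.1 q.2) ∂(π' ω) :=
        lintegral_mono fun q => ENNReal.ofReal_le_ofReal (hineq ω q.1 q.2)

/-- **A dual pair certifies optimality.** If `π ∈ K(μ,ν)` and there are jointly measurable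
`ψ`, `φ` with `φ(ω,y) − ψ(ω,x) ≤ c(ω,x,y)` everywhere such that the contact set
`Γ_ω = {(x,y) : φ(ω,y) − ψ(ω,x) = c(ω,x,y)}` has full `π_ω`-measure for every `ω`, then
`π` is a stochastic optimal transference plan. -/
theorem optimal_of_dual_pair
    {Ω X Y : Type*} [MeasurableSpace Ω]
    [TopologicalSpace X] [PolishSpace X] [MeasurableSpace X] [BorelSpace X]
    [TopologicalSpace Y] [PolishSpace Y] [MeasurableSpace Y] [BorelSpace Y]
    (P : Measure Ω) [IsProbabilityMeasure P]
    (μ : Kernel Ω X) [IsMarkovKernel μ] (ν : Kernel Ω Y) [IsMarkovKernel ν]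
    (c : Ω → X → Y → ℝ)
    (hc_nonneg : ∀ ω x y, 0 ≤ c ω x y)
    (hc_cont : ∀ ω, Continuous (fun q : X × Y => c ω q.1 q.2))
    (hc_meas : ∀ x y, Measurable (fun ω => c ω x y))
    (hint : ∫⁻ ω, ∫⁻ q, ENNReal.ofReal (c ω q.1 q.2) ∂((μ ω).prod (ν ω)) ∂P < ⊤)
    (π : Kernel Ω (X × Y)) [IsMarkovKernel π] (hπfst : π.fst = μ) (hπsnd : π.snd = ν)
    (ψ : Ω → X → ℝ) (φ : Ω → Y → ℝ)
    (hψ : Measurable (fun q : Ω × X => ψ q.1 q.2))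
    (hφ : Measurable (fun q : Ω × Y => φ q.1 q.2))
    (hineq : ∀ ω x y, φ ω y - ψ ω x ≤ c ω x y)
    (hfull : ∀ ω, π ω {q : X × Y | φ ω q.2 - ψ ω q.1 = c ω q.1 q.2} = 1) :
    ∫⁻ ω, ∫⁻ q, ENNReal.ofReal (c ω q.1 q.2) ∂(π ω) ∂P = stochCost P c μ ν :=
  optimal_of_dual_pair_general P μ ν c hc_nonneg hc_cont π hπfst hπsnd ψ φ hψ hφ hineq hfull
end

section
/- Let X and Y be Polish spaces, (Ω,F,P) a probability space, μ a probability kernel from Ω to X, ν a probability kernel from Ω to Y, and c : Ω×X×Y → [0,∞) a function such that for each ω the map (x,y) ↦ c(ω,x,y) is continuous, for each (x,y) the map ω ↦ c(ω,x,y) is F-measurable, and E ∫_{X×Y} c(ω,x,y) μ_ω(dx) ν_ω(dy) < +∞. Let π be a stochastic optimal transference plan and let ψ, φ be jointly measurable functions with φ(ω,y) − ψ(ω,x) ≤ c(ω,x,y) everywhere, such that Γ_ω := {(x,y) : φ(ω,y) − ψ(ω,x) = c(ω,x,y)} has π_ω-full measure for each ω. Then for any other stochastic optimal transference plan π̃ ∈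 K(μ,ν), for P-almost all ω the measure π̃_ω is concentrated on Γ_ω. -/
/-!
The potentials `φ, ψ` need not be integrable, so `∫ (φ - ψ) dπ̃ = ∫ (φ - ψ) dπ` cannot be used
directly. After clipping both at level `n`, the integrals of the clipped difference `Dₙ` depend
only on the marginals and hence agree under `π` and `π̃`. Under `π` we have `φ - ψ = c ≥ 0`
almost surely, so `0 ≤ Dₙ ≤ c` and dominated convergence gives `∫ Dₙ dπ → ∫ c dπ`. Since
`Dₙ ≤ c` everywhere and both plans have the same cost, Fatou's lemma applied to `c - Dₙ` under
`π̃` yields `∫ (c - (φ - ψ)) dπ̃ = 0`.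
-/

open MeasureTheory ProbabilityTheory Filter ENNReal

open Topology

noncomputable def truncate (n : ℕ) (t : ℝ) : ℝ :=
  Set.projIcc (-n : ℝ) n (neg_le_self n.cast_nonneg) t

lemma continuous_truncate (n : ℕ) : Continuous (truncate n) :=
  continuous_subtype_val.comp continuous_projIcc

lemma monotone_truncate (n : ℕ) : Monotone (truncate n) :=
  fun _ _ h => Set.monotone_projIcc _ h

lemma abs_truncate_le (n : ℕ) (t : ℝ) : |truncate n t| ≤ n :=
  abs_le.2 (Set.projIcc _ _ _ t).2

lemma abs_truncate_sub_truncate_le (n : ℕ) (a b : ℝ) :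
    |truncate n a - truncate n b| ≤ |a - b| :=
  Set.abs_projIcc_sub_projIcc _

lemma truncate_sub_truncate_le {n : ℕ} {a b r : ℝ} (hr : 0 ≤ r) (h : a - b ≤ r) :
    truncate n a - truncate n b ≤ r := by
  rcases le_total a b with hab | hab
  · linarith [monotone_truncate n hab]
  · calc truncate n a - truncate n b ≤ |a - b| :=
          (le_abs_self _).trans (abs_truncate_sub_truncate_le n a b)
      _ ≤ r := by rwa [abs_of_nonneg (sub_nonneg.2 hab)]

lemma tendsto_truncate (t : ℝ) : Tendsto (fun n => truncate n t) atTop (𝓝 t) := by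
  refine tendsto_atTop_of_eventually_const (i₀ := ⌈|t|⌉₊) fun n hn => ?_
  have ht : |t| ≤ n := (Nat.le_ceil _).trans (by exact_mod_cast hn)
  exact congrArg Subtype.val (Set.projIcc_of_mem _ (abs_le.1 ht))

section TruncatedDifference

variable {α : Type*} [MeasurableSpace α] {θ m : Measure α} {u v F : α → ℝ}

lemma integrable_truncate_comp (μ : Measure α) [IsFiniteMeasure μ] {w : α → ℝ}
    (hw : Measurable w) (n : ℕ) : Integrable (fun a => truncate n (w a)) μ :=
  Integrable.of_bound ((continuous_truncate n).measurable.comp hw).aestronglyMeasurable n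
    (ae_of_all _ fun a => abs_truncate_le n (w a))

lemma integral_truncate_sub_eq_of_map_eq [IsFiniteMeasure θ] [IsFiniteMeasure m]
    (hu : Measurable u) (hv : Measurable v) (hmu : m.map u = θ.map u)
    (hmv : m.map v = θ.map v) (n : ℕ) :
    ∫ a, (truncate n (u a) - truncate n (v a)) ∂m =
      ∫ a, (truncate n (u a) - truncate n (v a)) ∂θ := by
  have hmap : ∀ w : α → ℝ, Measurable w → m.map w = θ.map w →
      ∫ a, truncate n (w a) ∂m = ∫ a, truncate n (w a) ∂θ := fun w hw h => by
    rw [← integral_map hw.aemeasurable (continuous_truncate n).aestronglyMeasurable, h,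
      integral_map hw.aemeasurable (continuous_truncate n).aestronglyMeasurable]
  rw [integral_sub (integrable_truncate_comp m hu n) (integrable_truncate_comp m hv n),
    integral_sub (integrable_truncate_comp θ hu n) (integrable_truncate_comp θ hv n),
    hmap u hu hmu, hmap v hv hmv]

lemma tendsto_integral_truncate_sub (hu : Measurable u) (hv : Measurable v)
    (hF : Integrable F θ) (hθ : ∀ᵐ a ∂θ, u a - v a = F a) :
    Tendsto (fun n : ℕ => ∫ a, (truncate n (u a) - truncate n (v a)) ∂θ) atTop
      (𝓝 (∫ a, F a ∂θ)) := by
  refine tendsto_integral_of_dominated_convergence (fun a => ‖F a‖)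
    (fun n => (((continuous_truncate n).measurable.comp hu).sub
      ((continuous_truncate n).measurable.comp hv)).aestronglyMeasurable) hF.norm
    (fun n => ?_) ?_
  · filter_upwards [hθ] with a ha
    rw [← ha]
    exact abs_truncate_sub_truncate_le n _ _
  · filter_upwards [hθ] with a ha
    rw [← ha]
    exact (tendsto_truncate _).sub (tendsto_truncate _)

lemma lintegral_ofReal_sub_sub_eq_zero_of_map_eq [IsFiniteMeasure θ] [IsFiniteMeasure m]
    (hu : Measurable u) (hv : Measurable v) (hmu : m.map u = θ.map u)
    (hmv : m.map v = θ.map v) (hFθ : Integrable F θ) (hFm : Integrable F m)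
    (hF : ∫ a, F a ∂m ≤ ∫ a, F a ∂θ) (hF₀ : 0 ≤ F) (hle : ∀ a, u a - v a ≤ F a)
    (hθ : ∀ᵐ a ∂θ, u a - v a = F a) :
    ∫⁻ a, ENNReal.ofReal (F a - (u a - v a)) ∂m = 0 := by
  set D : ℕ → α → ℝ := fun n a => truncate n (u a) - truncate n (v a)
  have hD : ∀ n, Integrable (D n) m := fun n =>
    (integrable_truncate_comp m hu n).sub (integrable_truncate_comp m hv n)
  have hD_le : ∀ n a, D n a ≤ F a := fun n a => truncate_sub_truncate_le (hF₀ a) (hle a)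
  have hgap_le : ∀ n, ∫⁻ a, ENNReal.ofReal (F a - D n a) ∂m ≤
      ENNReal.ofReal (∫ a, F a ∂θ - ∫ a, D n a ∂θ) := fun n => by
    calc ∫⁻ a, ENNReal.ofReal (F a - D n a) ∂m = ENNReal.ofReal (∫ a, F a - D n a ∂m) :=
          (ofReal_integral_eq_lintegral_ofReal (hFm.sub (hD n))
            (ae_of_all _ fun a => sub_nonneg.2 (hD_le n a))).symm
      _ = ENNReal.ofReal (∫ a, F a ∂m - ∫ a, D n a ∂θ) := by
          rw [integral_sub hFm (hD n), integral_truncate_sub_eq_of_map_eq hu hv hmu hmv n]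
      _ ≤ ENNReal.ofReal (∫ a, F a ∂θ - ∫ a, D n a ∂θ) := by gcongr
  have hgap_tendsto : Tendsto (fun n => ENNReal.ofReal (∫ a, F a ∂θ - ∫ a, D n a ∂θ)) atTop
      (𝓝 0) := by
    have h := (ENNReal.continuous_ofReal.tendsto _).comp
      ((tendsto_const_nhds (x := ∫ a, F a ∂θ)).sub (tendsto_integral_truncate_sub hu hv hFθ hθ))
    rwa [sub_self, ENNReal.ofReal_zero] at h
  refine le_antisymm ?_ zero_le
  calc ∫⁻ a, ENNReal.ofReal (F a - (u a - v a)) ∂m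
      = ∫⁻ a, liminf (fun n => ENNReal.ofReal (F a - D n a)) atTop ∂m :=
        lintegral_congr fun a => (((ENNReal.continuous_ofReal.tendsto _).comp
          (tendsto_const_nhds.sub
            ((tendsto_truncate _).sub (tendsto_truncate _)))).liminf_eq).symm
    _ ≤ liminf (fun n => ∫⁻ a, ENNReal.ofReal (F a - D n a) ∂m) atTop :=
        lintegral_liminf_le' fun n => (hFm.sub (hD n)).aemeasurable.ennreal_ofReal
    _ ≤ liminf (fun n => ENNReal.ofReal (∫ a, F a ∂θ - ∫ a, D n a ∂θ)) atTop :=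
        liminf_le_liminf (Eventually.of_forall hgap_le)
    _ = 0 := hgap_tendsto.liminf_eq

theorem ae_sub_eq_of_map_eq [IsFiniteMeasure θ] [IsFiniteMeasure m]
    (hu : Measurable u) (hv : Measurable v) (hmu : m.map u = θ.map u)
    (hmv : m.map v = θ.map v) (hFθ : Integrable F θ) (hFm : Integrable F m)
    (hF : ∫ a, F a ∂m ≤ ∫ a, F a ∂θ) (hF₀ : 0 ≤ F) (hle : ∀ a, u a - v a ≤ F a)
    (hθ : ∀ᵐ a ∂θ, u a - v a = F a) :
    ∀ᵐ a ∂m, u a - v a = F a := by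
  filter_upwards [(lintegral_eq_zero_iff'
    (hFm.aemeasurable.sub (hu.sub hv).aemeasurable).ennreal_ofReal).1
      (lintegral_ofReal_sub_sub_eq_zero_of_map_eq hu hv hmu hmv hFθ hFm hF hF₀ hle hθ)]
    with a ha
  have : F a - (u a - v a) ≤ 0 := ENNReal.ofReal_eq_zero.1 ha
  linarith [hle a]

end TruncatedDifference

section Plans

variable {Ω X Y : Type*} [MeasurableSpace Ω] [MeasurableSpace X] [MeasurableSpace Y]
  {P : Measure Ω}

lemma map_compProd_comp_fst [SFinite P] {Z : Type*} [MeasurableSpace Z]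
    (κ : Kernel Ω (X × Y)) [IsSFiniteKernel κ] {f : Ω × X → Z} (hf : Measurable f) :
    (P ⊗ₘ κ).map (fun p => f (p.1, p.2.1)) = (P ⊗ₘ κ.fst).map f := by
  rw [Kernel.fst_eq, Measure.compProd_map measurable_fst, Measure.map_map hf (by fun_prop)]
  rfl

lemma map_compProd_comp_snd [SFinite P] {Z : Type*} [MeasurableSpace Z]
    (κ : Kernel Ω (X × Y)) [IsSFiniteKernel κ] {f : Ω × Y → Z} (hf : Measurable f) :
    (P ⊗ₘ κ).map (fun p => f (p.1, p.2.2)) = (P ⊗ₘ κ.snd).map f := by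
  rw [Kernel.snd_eq, Measure.compProd_map measurable_snd, Measure.map_map hf (by fun_prop)]
  rfl

lemma stochCost_le_lintegral_prod (c : Ω → X → Y → ℝ) (μ : Kernel Ω X) [IsMarkovKernel μ]
    (ν : Kernel Ω Y) [IsMarkovKernel ν] :
    stochCost P c μ ν ≤
      ∫⁻ ω, ∫⁻ q, ENNReal.ofReal (c ω q.1 q.2) ∂((μ ω).prod (ν ω)) ∂P := by
  refine (iInf₂_le (μ ×ₖ ν) ⟨inferInstance, Kernel.fst_prod μ ν, Kernel.snd_prod μ ν⟩).trans_eq ?_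
  simp_rw [Kernel.prod_apply]

end Plans

section CompProdIntegral

variable {Ω Z : Type*} [MeasurableSpace Ω] [MeasurableSpace Z] {P : Measure Ω} [SFinite P]
  {κ : Kernel Ω Z} [IsSFiniteKernel κ] {f : Ω × Z → ℝ}

lemma integrable_compProd_of_lintegral_ne_top (hf : Measurable f) (hf₀ : 0 ≤ f)
    (h : ∫⁻ ω, ∫⁻ z, ENNReal.ofReal (f (ω, z)) ∂(κ ω) ∂P ≠ ∞) : Integrable f (P ⊗ₘ κ) :=
  (lintegral_ofReal_ne_top_iff_integrable hf.aestronglyMeasurable (ae_of_all _ hf₀)).1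
    (by rwa [Measure.lintegral_compProd hf.ennreal_ofReal])

lemma integral_compProd_eq_toReal_lintegral (hf : Measurable f) (hf₀ : 0 ≤ f) :
    ∫ p, f p ∂(P ⊗ₘ κ) = (∫⁻ ω, ∫⁻ z, ENNReal.ofReal (f (ω, z)) ∂(κ ω) ∂P).toReal := by
  rw [integral_eq_lintegral_of_nonneg_ae (ae_of_all _ hf₀) hf.aestronglyMeasurable,
    Measure.lintegral_compProd hf.ennreal_ofReal]

end CompProdIntegral

/-- **The contact set is independent of the optimal plan.**
Let `π` be a stochastic optimal transference plan and `ψ, φ` jointly measurable with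
`φ(ω,y) − ψ(ω,x) ≤ c(ω,x,y)` everywhere, such that the contact set
`Γ_ω = {(x,y) : φ(ω,y) − ψ(ω,x) = c(ω,x,y)}` has full `π_ω`-measure for every `ω`.
Then any other stochastic optimal transference plan `π̃ ∈ K(μ,ν)` is, for `P`-almost all
`ω`, concentrated on `Γ_ω`. -/
theorem other_optimal_plan_concentrated_on_contact_set
    {Ω X Y : Type*} [MeasurableSpace Ω]
    [TopologicalSpace X] [PolishSpace X] [MeasurableSpace X] [BorelSpace X]
    [TopologicalSpace Y] [PolishSpace Y] [MeasurableSpace Y] [BorelSpace Y]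
    (P : Measure Ω) [IsProbabilityMeasure P]
    (μ : Kernel Ω X) [IsMarkovKernel μ] (ν : Kernel Ω Y) [IsMarkovKernel ν]
    (c : Ω → X → Y → ℝ)
    (hc_nonneg : ∀ ω x y, 0 ≤ c ω x y)
    (hc_cont : ∀ ω, Continuous (fun q : X × Y => c ω q.1 q.2))
    (hc_meas : ∀ x y, Measurable (fun ω => c ω x y))
    (hint : ∫⁻ ω, ∫⁻ q, ENNReal.ofReal (c ω q.1 q.2) ∂((μ ω).prod (ν ω)) ∂P < ⊤)
    (π : Kernel Ω (X × Y)) [IsMarkovKernel π] (hπfst : π.fst = μ) (hπsnd : π.snd = ν)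
    (hopt : ∫⁻ ω, ∫⁻ q, ENNReal.ofReal (c ω q.1 q.2) ∂(π ω) ∂P = stochCost P c μ ν)
    (ψ : Ω → X → ℝ) (φ : Ω → Y → ℝ)
    (hψ : Measurable (fun q : Ω × X => ψ q.1 q.2))
    (hφ : Measurable (fun q : Ω × Y => φ q.1 q.2))
    (hineq : ∀ ω x y, φ ω y - ψ ω x ≤ c ω x y)
    (hfull : ∀ ω, π ω {q : X × Y | φ ω q.2 - ψ ω q.1 = c ω q.1 q.2} = 1)
    (π' : Kernel Ω (X × Y)) [IsMarkovKernel π'] (hπ'fst : π'.fst = μ) (hπ'snd : π'.snd = ν)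
    (hopt' : ∫⁻ ω, ∫⁻ q, ENNReal.ofReal (c ω q.1 q.2) ∂(π' ω) ∂P = stochCost P c μ ν) :
    ∀ᵐ ω ∂P, π' ω {q : X × Y | φ ω q.2 - ψ ω q.1 = c ω q.1 q.2}ᶜ = 0 := by
  have hc : Measurable fun p : Ω × (X × Y) => c p.1 p.2.1 p.2.2 :=
    (measurable_uncurry_of_continuous_of_measurable (u := fun (q : X × Y) ω => c ω q.1 q.2)
      hc_cont fun q => hc_meas q.1 q.2).comp measurable_swap
  have hc₀ : 0 ≤ fun p : Ω × (X × Y) => c p.1 p.2.1 p.2.2 := fun p => hc_nonneg _ _ _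
  have hcost : stochCost P c μ ν ≠ ∞ :=
    ((stochCost_le_lintegral_prod c μ ν).trans_lt hint).ne
  have hu : Measurable fun p : Ω × (X × Y) => φ p.1 p.2.2 :=
    hφ.comp (measurable_fst.prodMk measurable_snd.snd)
  have hv : Measurable fun p : Ω × (X × Y) => ψ p.1 p.2.1 :=
    hψ.comp (measurable_fst.prodMk measurable_snd.fst)
  have hcontact :
      MeasurableSet {p : Ω × (X × Y) | φ p.1 p.2.2 - ψ p.1 p.2.1 = c p.1 p.2.1 p.2.2} :=
    measurableSet_eq_fun (hu.sub hv) hc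
  have hπ_contact : ∀ᵐ p ∂(P ⊗ₘ π), φ p.1 p.2.2 - ψ p.1 p.2.1 = c p.1 p.2.1 p.2.2 :=
    Measure.ae_compProd_of_ae_ae hcontact (ae_of_all _ fun ω =>
      ae_iff.2 ((prob_compl_eq_zero_iff (measurable_prodMk_left hcontact)).2 (hfull ω)))
  have hπ' := ae_sub_eq_of_map_eq hu hv
    (by rw [map_compProd_comp_snd _ hφ, map_compProd_comp_snd _ hφ, hπsnd, hπ'snd])
    (by rw [map_compProd_comp_fst _ hψ, map_compProd_comp_fst _ hψ, hπfst, hπ'fst])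
    (integrable_compProd_of_lintegral_ne_top hc hc₀ (hopt ▸ hcost))
    (integrable_compProd_of_lintegral_ne_top hc hc₀ (hopt' ▸ hcost))
    (by rw [integral_compProd_eq_toReal_lintegral hc hc₀,
      integral_compProd_eq_toReal_lintegral hc hc₀, hopt, hopt'])
    hc₀ (fun p => hineq _ _ _) hπ_contact
  filter_upwards [Measure.ae_ae_of_ae_compProd hπ'] with ω hω
  exact ae_iff.1 hω
end

section
/- Let X and Y be Polish spaces with fixed base points x_0 ∈ X, y_0 ∈ Y, and let C be the space of nonnegative continuous functions c : X×Y → [0,∞) equipped with the metric of uniform convergence on the products of closed balls B^m_X(x_0) × B^m_Y(y_0). Let (c_n, μ_n, ν_n) be a sequence with c_n ∈ C, μ_n ∈ P(X), ν_n ∈ P(Y) such that sup_n ∫_{X×Y} c_n(x,y) μ_n(dx) ν_n(dy) ≤ M for a constant M, and suppose c_n → c uniformly on each B^m_X(x_0) × B^m_Y(y_0), μ_n → μ weakly and ν_n → ν weakly. Then ∫_{X×Y} c(x,y) μ(dx) ν(dy) ≤ M. -/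
/-!
Since `μn ⊗ νn → μ ⊗ ν` weakly, the portmanteau inequality `∫ f dP ≤ liminf ∫ f dPₙ` for
continuous `f ≥ 0` applies on `X × Y`. Cut `c` off continuously outside the ball of radius `m`
around `(x₀, y₀)`: on that ball `c ≤ cn n + ε` for large `n`, so the cut-off integrand has
`(μ ⊗ ν)`-integral at most `M + ε` for every `ε`, hence at most `M`. Fatou's lemma as `m → ∞`
removes the cut-off.
-/

open MeasureTheory Filter Topology ENNReal Metric

theorem MeasureTheory.ProbabilityMeasure.lintegral_le_of_tendsto_of_eventually_le_add
    {Ω : Type*} [MeasurableSpace Ω] [TopologicalSpace Ω] [OpensMeasurableSpace Ω]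
    [HasOuterApproxClosed Ω]
    {P : ProbabilityMeasure Ω} {Ps : ℕ → ProbabilityMeasure Ω} (hPs : Tendsto Ps atTop (𝓝 P))
    {f : Ω → ℝ} (hf : Continuous f) (hf₀ : 0 ≤ f) {M : ℝ≥0∞}
    (hM : ∀ ε > 0, ∀ᶠ n in atTop, ∫⁻ x, ENNReal.ofReal (f x) ∂(Ps n) ≤ M + ENNReal.ofReal ε) :
    ∫⁻ x, ENNReal.ofReal (f x) ∂P ≤ M := by
  refine ENNReal.le_of_forall_pos_le_add fun ε hε _ => ?_
  calc ∫⁻ x, ENNReal.ofReal (f x) ∂P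
      ≤ atTop.liminf fun n => ∫⁻ x, ENNReal.ofReal (f x) ∂(Ps n) :=
        lintegral_le_liminf_lintegral_of_forall_isOpen_measure_le_liminf_measure hf hf₀
          fun _ hG => ProbabilityMeasure.le_liminf_measure_open_of_tendsto hPs hG
    _ ≤ M + ε := by
        simpa using liminf_le_of_frequently_le' (hM ε hε).frequently

noncomputable def ballCutoff {Ω : Type*} [PseudoMetricSpace Ω] (p : Ω) (r : ℝ) (q : Ω) : ℝ :=
  max 0 (min 1 (r - dist q p))

section ballCutoff

variable {Ω : Type*} [PseudoMetricSpace Ω] {p q : Ω} {r : ℝ}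

theorem continuous_ballCutoff : Continuous (ballCutoff p r) := by
  unfold ballCutoff; fun_prop

theorem ballCutoff_nonneg : 0 ≤ ballCutoff p r q := le_max_left _ _

theorem ballCutoff_le_one : ballCutoff p r q ≤ 1 := max_le zero_le_one (min_le_left _ _)

theorem ballCutoff_eq_zero (hq : q ∉ closedBall p r) : ballCutoff p r q = 0 := by
  rw [mem_closedBall, not_le] at hq
  exact max_eq_left (min_le_of_right_le (by linarith))

theorem ballCutoff_eq_one (hq : dist q p + 1 ≤ r) : ballCutoff p r q = 1 := by
  rw [ballCutoff, min_eq_left (by linarith), max_eq_right zero_le_one]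

theorem eventually_ballCutoff_eq_one (p q : Ω) : ∀ᶠ m : ℕ in atTop, ballCutoff p m q = 1 :=
  (tendsto_natCast_atTop_atTop.eventually_ge_atTop (dist q p + 1)).mono
    fun _ => ballCutoff_eq_one

variable [MeasurableSpace Ω]

theorem lintegral_mul_ballCutoff_le (ρ : Measure Ω) [IsProbabilityMeasure ρ] {f g : Ω → ℝ}
    (hf₀ : 0 ≤ f) {ε : ℝ} (hfg : ∀ q ∈ closedBall p r, f q ≤ g q + ε) :
    ∫⁻ q, ENNReal.ofReal (f q * ballCutoff p r q) ∂ρ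
      ≤ ∫⁻ q, ENNReal.ofReal (g q) ∂ρ + ENNReal.ofReal ε := by
  have hpt : ∀ q, ENNReal.ofReal (f q * ballCutoff p r q)
      ≤ ENNReal.ofReal (g q) + ENNReal.ofReal ε := by
    intro q
    by_cases hq : q ∈ closedBall p r
    · refine (ENNReal.ofReal_le_ofReal ?_).trans ENNReal.ofReal_add_le
      calc f q * ballCutoff p r q ≤ f q := mul_le_of_le_one_right (hf₀ q) ballCutoff_le_one
        _ ≤ g q + ε := hfg q hq
    · simp [ballCutoff_eq_zero hq]
  calc ∫⁻ q, ENNReal.ofReal (f q * ballCutoff p r q) ∂ρ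
      ≤ ∫⁻ q, (ENNReal.ofReal (g q) + ENNReal.ofReal ε) ∂ρ := lintegral_mono hpt
    _ = ∫⁻ q, ENNReal.ofReal (g q) ∂ρ + ENNReal.ofReal ε := by
        rw [lintegral_add_right _ measurable_const, lintegral_const, measure_univ, mul_one]

variable [OpensMeasurableSpace Ω]

theorem lintegral_le_of_forall_lintegral_mul_ballCutoff_le (ρ : Measure Ω) {f : Ω → ℝ}
    (hf : Measurable f) (p : Ω) {M : ℝ≥0∞}
    (hM : ∀ m : ℕ, ∫⁻ q, ENNReal.ofReal (f q * ballCutoff p m q) ∂ρ ≤ M) :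
    ∫⁻ q, ENNReal.ofReal (f q) ∂ρ ≤ M := by
  have hlim : ∀ q, atTop.liminf (fun m : ℕ => ENNReal.ofReal (f q * ballCutoff p m q))
      = ENNReal.ofReal (f q) := fun q =>
    (tendsto_const_nhds.congr' <| (eventually_ballCutoff_eq_one p q).mono
      fun m hm => by rw [hm, mul_one]).liminf_eq
  calc ∫⁻ q, ENNReal.ofReal (f q) ∂ρ
      = ∫⁻ q, atTop.liminf (fun m : ℕ => ENNReal.ofReal (f q * ballCutoff p m q)) ∂ρ := by
        simp only [hlim]
    _ ≤ atTop.liminf fun m : ℕ => ∫⁻ q, ENNReal.ofReal (f q * ballCutoff p m q) ∂ρ :=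
        lintegral_liminf_le fun m =>
          (hf.mul continuous_ballCutoff.measurable).ennreal_ofReal
    _ ≤ M := liminf_le_of_frequently_le' (Frequently.of_forall hM)

end ballCutoff

theorem lintegral_prod_le_of_tendsto_general
    {X Y : Type*}
    [MetricSpace X] [SecondCountableTopology X]
    [MeasurableSpace X] [BorelSpace X]
    [MetricSpace Y] [SecondCountableTopology Y]
    [MeasurableSpace Y] [BorelSpace Y]
    (x₀ : X) (y₀ : Y)
    (cn : ℕ → X → Y → ℝ) (c : X → Y → ℝ)
    (hc_cont : Continuous (fun q : X × Y => c q.1 q.2))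
    (hc_nonneg : ∀ x y, 0 ≤ c x y)
    (μn : ℕ → ProbabilityMeasure X) (μ : ProbabilityMeasure X)
    (νn : ℕ → ProbabilityMeasure Y) (ν : ProbabilityMeasure Y)
    (M : ℝ≥0∞)
    (hM : ∀ n, ∫⁻ q, ENNReal.ofReal (cn n q.1 q.2)
        ∂((μn n : Measure X).prod (νn n : Measure Y)) ≤ M)
    (hcconv : ∀ m : ℕ, TendstoUniformlyOn (fun (n : ℕ) (q : X × Y) => cn n q.1 q.2)
        (fun q : X × Y => c q.1 q.2) atTop
        ((Metric.closedBall x₀ (m : ℝ)) ×ˢ (Metric.closedBall y₀ (m : ℝ))))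
    (hμ : Tendsto μn atTop (𝓝 μ)) (hν : Tendsto νn atTop (𝓝 ν)) :
    ∫⁻ q, ENNReal.ofReal (c q.1 q.2) ∂((μ : Measure X).prod (ν : Measure Y)) ≤ M := by
  have hprod : Tendsto (fun n => (μn n).prod (νn n)) atTop (𝓝 (μ.prod ν)) :=
    (ProbabilityMeasure.continuous_prod.tendsto _).comp (hμ.prodMk_nhds hν)
  refine lintegral_le_of_forall_lintegral_mul_ballCutoff_le _ hc_cont.measurable (x₀, y₀)
    fun m => ?_
  refine ProbabilityMeasure.lintegral_le_of_tendsto_of_eventually_le_add hprod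
    (hc_cont.mul continuous_ballCutoff) (fun q => mul_nonneg (hc_nonneg _ _) ballCutoff_nonneg)
    fun ε hε => ?_
  filter_upwards [Metric.tendstoUniformlyOn_iff.mp (hcconv m) ε hε] with n hn
  have hclose : ∀ q ∈ closedBall (x₀, y₀) (m : ℝ), c q.1 q.2 ≤ cn n q.1 q.2 + ε := by
    intro q hq
    rw [← closedBall_prod_same] at hq
    linarith [(abs_sub_lt_iff.mp (Real.dist_eq _ _ ▸ hn q hq)).1]
  exact (lintegral_mul_ballCutoff_le _ (fun q : X × Y => hc_nonneg q.1 q.2) hclose).trans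
    (add_le_add_left (hM n) _)

/-- **Stability of the integral bound under convergence in `𝕄`.**
If `∫ c_n d(μ_n ⊗ ν_n) ≤ M` for all `n`, `c_n → c` uniformly on products of closed balls,
`μ_n → μ` weakly and `ν_n → ν` weakly, then `∫ c d(μ ⊗ ν) ≤ M`. -/
theorem lintegral_prod_le_of_tendsto
    {X Y : Type*}
    [MetricSpace X] [CompleteSpace X] [SecondCountableTopology X]
    [MeasurableSpace X] [BorelSpace X]
    [MetricSpace Y] [CompleteSpace Y] [SecondCountableTopology Y]
    [MeasurableSpace Y] [BorelSpace Y]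
    (x₀ : X) (y₀ : Y)
    (cn : ℕ → X → Y → ℝ) (c : X → Y → ℝ)
    (hcn_cont : ∀ n, Continuous (fun q : X × Y => cn n q.1 q.2))
    (hcn_nonneg : ∀ n x y, 0 ≤ cn n x y)
    (hc_cont : Continuous (fun q : X × Y => c q.1 q.2))
    (hc_nonneg : ∀ x y, 0 ≤ c x y)
    (μn : ℕ → ProbabilityMeasure X) (μ : ProbabilityMeasure X)
    (νn : ℕ → ProbabilityMeasure Y) (ν : ProbabilityMeasure Y)
    (M : ℝ≥0∞)
    (hM : ∀ n, ∫⁻ q, ENNReal.ofReal (cn n q.1 q.2)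
        ∂((μn n : Measure X).prod (νn n : Measure Y)) ≤ M)
    (hcconv : ∀ m : ℕ, TendstoUniformlyOn (fun (n : ℕ) (q : X × Y) => cn n q.1 q.2)
        (fun q : X × Y => c q.1 q.2) atTop
        ((Metric.closedBall x₀ (m : ℝ)) ×ˢ (Metric.closedBall y₀ (m : ℝ))))
    (hμ : Tendsto μn atTop (𝓝 μ)) (hν : Tendsto νn atTop (𝓝 ν)) :
    ∫⁻ q, ENNReal.ofReal (c q.1 q.2) ∂((μ : Measure X).prod (ν : Measure Y)) ≤ M :=
  lintegral_prod_le_of_tendsto_general x₀ y₀ cn c hc_cont hc_nonneg μn μ νn ν M hM hcconv hμ hν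
end
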